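/- Let $f \in \mathbb{C}_p[[X]]$ converge on the open unit disk and suppose $f$ is $O(\log_p(1+X)^{1/2})$ (i.e., $|f|_r = O(|\log_p(1+X)|_r^{1/2})$ as $r \to 1^-$). If $f(\zeta - 1) = 0$ for every $p$-power root of unity $\zeta$ (all $\zeta$ with $\zeta^{p^n} = 1$ for some $n$), then $f = 0$. -/

import Mathlib

/-
If `f` vanishes at every `ζ - 1` with `ζ ^ p ^ m = 1`, it is divisible by
`∏ (X - (ζ - 1)) = (1 + X) ^ p ^ m - 1`. Measure power series by `sup ‖aₙ‖ sⁿ` on the radius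
`s = p ^ (-1 / p ^ m)`, which encloses all these points. By the ultrametric inequality, dividing
by `X - z` with `‖z‖ < s` multiplies this norm by at most `1 / s`, so dividing by
`(1 + X) ^ p ^ m - 1` multiplies it by at most `s ^ (-p ^ m) = p`. The lowest coefficient of `f` is
`p ^ m` times the lowest coefficient of the quotient. Together with the growth hypothesis
`sup ‖aₙ‖ sⁿ = O((p ^ m) ^ (1/2))`, this makes the lowest coefficient `O(p ^ (-m / 2))` for every
`m`, so it cannot be nonzero.
-/

open Finset PowerSeries

lemma succ_mul_pow_mul_one_sub_le {t : ℝ} (ht0 : 0 ≤ t) (ht1 : t ≤ 1) (n : ℕ) :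
    ((n : ℝ) + 1) * t ^ n * (1 - t) ≤ 1 := by
  have hsum : ((n : ℝ) + 1) * t ^ n ≤ ∑ k ∈ range (n + 1), t ^ k := by
    simpa using card_nsmul_le_sum (range (n + 1)) (t ^ ·) (t ^ n)
      fun k hk => pow_le_pow_of_le_one ht0 ht1 (Nat.lt_succ_iff.mp (mem_range.mp hk))
  calc ((n : ℝ) + 1) * t ^ n * (1 - t) ≤ (∑ k ∈ range (n + 1), t ^ k) * (1 - t) :=
        mul_le_mul_of_nonneg_right hsum (by linarith)
    _ = 1 - t ^ (n + 1) := geom_sum_mul_neg t (n + 1)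
    _ ≤ 1 := by linarith [pow_nonneg ht0 (n + 1)]

lemma succ_mul_pow_mul_one_sub_pow_le {t : ℝ} (ht0 : 0 ≤ t) (ht1 : t ≤ 1) (n N : ℕ) :
    ((n : ℝ) + 1) * t ^ n * (1 - t ^ N) ≤ N := by
  have bernoulli : 1 - t ^ N ≤ N * (1 - t) := by
    linarith [one_add_mul_sub_le_pow (by linarith : -1 ≤ t) N]
  calc ((n : ℝ) + 1) * t ^ n * (1 - t ^ N) ≤ ((n : ℝ) + 1) * t ^ n * (N * (1 - t)) :=
        mul_le_mul_of_nonneg_left bernoulli (by positivity)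
    _ = N * (((n : ℝ) + 1) * t ^ n * (1 - t)) := by ring
    _ ≤ N := mul_le_of_le_one_right (by positivity) (succ_mul_pow_mul_one_sub_le ht0 ht1 n)

lemma sqrt_succ_mul_pow_le {s : ℝ} (hs0 : 0 ≤ s) (hs1 : s ≤ 1) {N : ℕ} (hsN : s ^ N ≤ 1 / 2)
    (n : ℕ) : √((n : ℝ) + 1) * s ^ n ≤ √(2 * N) := by
  have hs2N : (s ^ 2) ^ N ≤ 1 / 2 := by
    rw [← pow_mul, mul_comm, pow_mul]
    nlinarith [pow_nonneg hs0 N]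
  have h := succ_mul_pow_mul_one_sub_pow_le (t := s ^ 2) (by positivity) (pow_le_one₀ hs0 hs1) n N
  rw [← Real.sqrt_sq (pow_nonneg hs0 n), ← Real.sqrt_mul (by positivity), ← pow_mul, mul_comm n,
    pow_mul]
  exact Real.sqrt_le_sqrt (by nlinarith [pow_nonneg (pow_nonneg hs0 2) n])

lemma coeff_order_mul {R : Type*} [Semiring R] [NoZeroDivisors R] (φ ψ : R⟦X⟧) :
    coeff (φ * ψ).order.toNat (φ * ψ) = coeff φ.order.toNat φ * coeff ψ.order.toNat ψ := by
  simpa only [constantCoeff_divXPowOrder, map_mul] using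
    congrArg constantCoeff (divXPowOrder_mul (f := φ) (g := ψ))

section TopologicalRing

variable {R : Type*} [CommRing R] [TopologicalSpace R] [IsTopologicalRing R]

lemma hasSum_coeff_X_sub_C_mul_mul_pow {g : R⟦X⟧} {w v : R} (z : R)
    (hg : HasSum (fun n => coeff n g * w ^ n) v) :
    HasSum (fun n => coeff n ((X - C z) * g) * w ^ n) ((w - z) * v) := by
  have hX : HasSum (fun n => coeff n (X * g) * w ^ n) (w * v) := by
    refine (hasSum_nat_add_iff' 1).mp ?_
    rw [sum_range_one, coeff_zero_X_mul, zero_mul, sub_zero]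
    have hshift : (fun n => coeff (n + 1) (X * g) * w ^ (n + 1)) =
        fun n => w * (coeff n g * w ^ n) := by
      funext n
      rw [coeff_succ_X_mul, pow_succ]
      ring
    rw [hshift]
    exact hg.mul_left w
  simpa [sub_mul, coeff_C_mul, mul_assoc] using hX.sub (hg.mul_left z)

/-- The quotient `(f - f(z)) / (X - z)`, computed coefficientwise. -/
noncomputable def quotXSubC (f : R⟦X⟧) (z : R) : R⟦X⟧ :=
  mk fun n => ∑' k, coeff (n + 1 + k) f * z ^ k

end TopologicalRing

section Field

variable {K : Type*} [Field K]

lemma prod_X_sub_C_image_sub_one [DecidableEq K] {N : ℕ} (hN : 0 < N) {ζ : K}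
    (hζ : IsPrimitiveRoot ζ N) :
    ∏ z ∈ (Polynomial.nthRootsFinset N (1 : K)).image (· - 1), (X - C z) =
      ((1 + X) ^ N - 1 : K⟦X⟧) := by
  have h := congrArg (Polynomial.aeval (1 + X : K⟦X⟧)) (Polynomial.X_pow_sub_one_eq_prod hN hζ)
  simp only [map_sub, map_pow, Polynomial.aeval_X, map_one, map_prod, Polynomial.aeval_C] at h
  rw [h, prod_image fun _ _ _ _ h => sub_left_injective h]
  refine prod_congr rfl fun ζ' _ => ?_
  simp only [map_sub, map_one, algebraMap_eq]
  ring

lemma coeff_one_add_X_pow_sub_one (N n : ℕ) :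
    coeff n ((1 + X) ^ N - 1 : K⟦X⟧) = if n = 0 then 0 else (N.choose n : K) := by
  have hcoe : ((1 + X) ^ N - 1 : K⟦X⟧) =
      (((1 + Polynomial.X) ^ N - 1 : Polynomial K) : K⟦X⟧) := by simp
  rw [hcoe, Polynomial.coeff_coe, Polynomial.coeff_sub, Polynomial.coeff_one_add_X_pow,
    Polynomial.coeff_one]
  split_ifs with h <;> simp [h]

lemma order_one_add_X_pow_sub_one {N : ℕ} (hN : (N : K) ≠ 0) :
    ((1 + X) ^ N - 1 : K⟦X⟧).order = 1 := by
  exact_mod_cast (order_eq_nat (n := 1)).mpr (by simp [coeff_one_add_X_pow_sub_one, hN])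

end Field

section NormedField

variable {K : Type*} [NormedField K]

lemma norm_coeff_order_mul_pow_le {N : ℕ} (hN : (N : K) ≠ 0) {F G : K⟦X⟧}
    (hFG : F = ((1 + X) ^ N - 1) * G) (hF : F ≠ 0) {s B : ℝ} (hs0 : 0 ≤ s) (hs1 : s ≤ 1)
    (hG : ∀ n, ‖coeff n G‖ * s ^ n ≤ B) :
    ‖coeff F.order.toNat F‖ * s ^ F.order.toNat ≤ ‖(N : K)‖ * B := by
  have hk : G.order.toNat ≤ F.order.toNat :=
    ENat.toNat_le_toNat (by rw [hFG, order_mul]; exact le_add_self) (order_eq_top.not.mpr hF)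
  have hcoeff : coeff F.order.toNat F = N * coeff G.order.toNat G := by
    rw [hFG, coeff_order_mul, order_one_add_X_pow_sub_one hN, ENat.toNat_one,
      coeff_one_add_X_pow_sub_one, if_neg one_ne_zero, Nat.choose_one_right]
  calc ‖coeff F.order.toNat F‖ * s ^ F.order.toNat
        = ‖(N : K)‖ * (‖coeff G.order.toNat G‖ * s ^ F.order.toNat) := by
          rw [hcoeff, norm_mul, mul_assoc]
    _ ≤ ‖(N : K)‖ * (‖coeff G.order.toNat G‖ * s ^ G.order.toNat) :=
          mul_le_mul_of_nonneg_left
            (mul_le_mul_of_nonneg_left (pow_le_pow_of_le_one hs0 hs1 hk) (norm_nonneg _))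
            (norm_nonneg _)
    _ ≤ ‖(N : K)‖ * B := by gcongr; exact hG _

variable {f : K⟦X⟧} {s B : ℝ} {z : K}

lemma norm_coeff_add_mul_pow_le (hf : ∀ n, ‖coeff n f‖ * s ^ n ≤ B) (hs : 0 < s) (n k : ℕ) :
    ‖coeff (n + k) f‖ * s ^ k ≤ B / s ^ n := by
  rw [le_div_iff₀ (by positivity), mul_assoc, ← pow_add, add_comm k]
  exact hf (n + k)

section Complete

variable [CompleteSpace K]

lemma summable_mul_pow_of_norm_mul_pow_le {a : ℕ → K} (ha : ∀ n, ‖a n‖ * s ^ n ≤ B)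
    (hz : ‖z‖ < s) : Summable fun n => a n * z ^ n := by
  have hs : 0 < s := (norm_nonneg z).trans_lt hz
  refine Summable.of_norm_bounded
    ((summable_geometric_of_lt_one (by positivity) ((div_lt_one hs).mpr hz)).mul_left B) fun n => ?_
  calc ‖a n * z ^ n‖ = ‖a n‖ * s ^ n * (‖z‖ / s) ^ n := by
        rw [norm_mul, norm_pow, div_pow, mul_assoc, mul_div_cancel₀ _ (by positivity)]
    _ ≤ B * (‖z‖ / s) ^ n := by gcongr; exact ha n

lemma summable_coeff_add_mul_pow (hf : ∀ n, ‖coeff n f‖ * s ^ n ≤ B) (hz : ‖z‖ < s) (n : ℕ) :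
    Summable fun k => coeff (n + k) f * z ^ k :=
  summable_mul_pow_of_norm_mul_pow_le
    (norm_coeff_add_mul_pow_le hf ((norm_nonneg z).trans_lt hz) n) hz

lemma X_sub_C_mul_quotXSubC (hf : ∀ n, ‖coeff n f‖ * s ^ n ≤ B) (hz : ‖z‖ < s)
    (hfz : HasSum (fun n => coeff n f * z ^ n) 0) :
    (X - C z) * quotXSubC f z = f := by
  set T : ℕ → K := fun n => ∑' k, coeff (n + k) f * z ^ k
  have hT : ∀ n, T n = coeff n f + z * T (n + 1) := by
    intro n
    simp only [T]
    rw [(summable_coeff_add_mul_pow hf hz n).tsum_eq_zero_add, ← tsum_mul_left]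
    congr 1
    · simp
    · congr 1
      funext k
      rw [pow_succ, show n + (k + 1) = n + 1 + k by omega]
      ring
  have hT0 : T 0 = 0 := by simpa [T] using hfz.tsum_eq
  ext n
  rw [sub_mul, map_sub, coeff_C_mul]
  rcases n with _ | n
  · simp only [coeff_zero_X_mul, quotXSubC, coeff_mk]
    linear_combination hT 0 - hT0
  · simp only [coeff_succ_X_mul, quotXSubC, coeff_mk]
    linear_combination hT (n + 1)

end Complete

section Ultrametric

variable [IsUltrametricDist K]

lemma norm_sub_one_pow_lt {p : ℕ} (hp : p.Prime) (hp0 : (p : K) ≠ 0) (hp1 : ‖(p : K)‖ < 1)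
    {m : ℕ} (hm : m ≠ 0) {ζ : K} (hζ : ζ ^ p ^ m = 1) :
    ‖ζ - 1‖ ^ p ^ m < ‖(p : K)‖ := by
  set N := p ^ m
  set u := ζ - 1
  have hN : 1 < N := Nat.one_lt_pow hm hp.one_lt
  have hu1 : ‖u‖ ≤ 1 := by
    have hζ1 : ‖ζ‖ = 1 := (pow_eq_one_iff_of_nonneg (norm_nonneg ζ) (n := N) (by omega)).mp
      (by rw [← norm_pow, hζ, norm_one])
    simpa [u, hζ1, sub_eq_add_neg] using IsUltrametricDist.norm_add_le_max ζ (-1)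
  have hexpand : u ^ N = -∑ k ∈ Ico 1 N, u ^ k * (N.choose k : K) := by
    have h := add_pow u 1 N
    rw [show u + 1 = ζ by ring, hζ, range_eq_Ico, sum_eq_sum_Ico_succ_bot (by omega),
      sum_Ico_succ_top (by omega)] at h
    simp only [one_pow, mul_one, pow_zero, Nat.choose_zero_right, Nat.choose_self,
      Nat.cast_one] at h
    linear_combination -h
  have hterm : ∀ k ∈ Ico 1 N, ‖u ^ k * (N.choose k : K)‖ ≤ ‖(p : K)‖ * ‖u‖ := by
    intro k hk
    obtain ⟨hk1, hkN⟩ := mem_Ico.mp hk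
    obtain ⟨c, hc⟩ := hp.dvd_choose_pow (by omega) hkN.ne
    rw [hc, Nat.cast_mul, norm_mul, norm_mul, norm_pow, mul_comm]
    gcongr
    · exact mul_le_of_le_one_right (norm_nonneg _) (IsUltrametricDist.norm_natCast_le_one K c)
    · exact pow_le_of_le_one (norm_nonneg u) hu1 (by omega)
  have hle : ‖u‖ ^ N ≤ ‖(p : K)‖ * ‖u‖ := by
    rw [← norm_pow, hexpand, norm_neg]
    exact IsUltrametricDist.norm_sum_le_of_forall_le_of_nonneg (by positivity) hterm
  rcases hu1.lt_or_eq with hlt | heq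
  · calc ‖u‖ ^ N ≤ ‖(p : K)‖ * ‖u‖ := hle
      _ < ‖(p : K)‖ := mul_lt_of_lt_one_right (norm_pos_iff.mpr hp0) hlt
  · rw [heq, one_pow, mul_one] at hle
    exact absurd hle hp1.not_ge

lemma norm_coeff_quotXSubC_mul_pow_le (hf : ∀ n, ‖coeff n f‖ * s ^ n ≤ B) (hs : 0 < s)
    (hz : ‖z‖ ≤ s) (n : ℕ) : ‖coeff n (quotXSubC f z)‖ * s ^ n ≤ B / s := by
  have hB : 0 ≤ B := (by positivity : 0 ≤ ‖coeff 0 f‖ * s ^ 0).trans (hf 0)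
  have hsum : ‖coeff n (quotXSubC f z)‖ ≤ B / s ^ (n + 1) := by
    rw [quotXSubC, coeff_mk]
    -- The triangle inequality would only give this up to a factor `1 / (1 - ‖z‖ / s)`.
    refine IsUltrametricDist.norm_tsum_le_of_forall_le_of_nonneg (by positivity) fun k => ?_
    rw [norm_mul, norm_pow]
    calc ‖coeff (n + 1 + k) f‖ * ‖z‖ ^ k ≤ ‖coeff (n + 1 + k) f‖ * s ^ k := by gcongr
      _ ≤ B / s ^ (n + 1) := norm_coeff_add_mul_pow_le hf hs (n + 1) k
  calc ‖coeff n (quotXSubC f z)‖ * s ^ n ≤ B / s ^ (n + 1) * s ^ n := by gcongr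
    _ = B / s := by field_simp; ring

end Ultrametric

variable [IsUltrametricDist K] [CompleteSpace K]

lemma hasSum_coeff_quotXSubC_mul_pow (hf : ∀ n, ‖coeff n f‖ * s ^ n ≤ B) (hz : ‖z‖ < s)
    (hfz : HasSum (fun n => coeff n f * z ^ n) 0) {w : K} (hw : ‖w‖ < s) (hwz : w ≠ z)
    (hfw : HasSum (fun n => coeff n f * w ^ n) 0) :
    HasSum (fun n => coeff n (quotXSubC f z) * w ^ n) 0 := by
  obtain ⟨v, hv⟩ := summable_mul_pow_of_norm_mul_pow_le
    (norm_coeff_quotXSubC_mul_pow_le hf ((norm_nonneg w).trans_lt hw) hz.le) hw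
  have hfv := hasSum_coeff_X_sub_C_mul_mul_pow z hv
  rw [X_sub_C_mul_quotXSubC hf hz hfz] at hfv
  have hv0 : v = 0 := by
    simpa [sub_eq_zero, hwz] using hfv.unique hfw
  rwa [hv0] at hv

lemma exists_eq_prod_X_sub_C_mul (S : Finset K) (hS : ∀ z ∈ S, ‖z‖ < s)
    (hf : ∀ n, ‖coeff n f‖ * s ^ n ≤ B) (hvanish : ∀ z ∈ S, HasSum (fun n => coeff n f * z ^ n) 0) :
    ∃ g, f = (∏ z ∈ S, (X - C z)) * g ∧ ∀ n, ‖coeff n g‖ * s ^ n ≤ B / s ^ #S := by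
  classical
  induction S using Finset.induction_on generalizing f B with
  | empty => exact ⟨f, by simp, by simpa using hf⟩
  | insert z S hzS ih =>
    have hz := hS z (mem_insert_self z S)
    have hs : 0 < s := (norm_nonneg z).trans_lt hz
    have hfz := hvanish z (mem_insert_self z S)
    obtain ⟨g, hg, hgB⟩ := ih (f := quotXSubC f z) (B := B / s)
      (fun w hw => hS w (mem_insert_of_mem hw))
      (norm_coeff_quotXSubC_mul_pow_le hf hs hz.le)
      fun w hw => hasSum_coeff_quotXSubC_mul_pow hf hz hfz (hS w (mem_insert_of_mem hw))
        (ne_of_mem_of_not_mem hw hzS) (hvanish w (mem_insert_of_mem hw))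
    refine ⟨g, ?_, fun n => ?_⟩
    · rw [prod_insert hzS, mul_assoc, ← hg, X_sub_C_mul_quotXSubC hf hz hfz]
    · rw [card_insert_of_notMem hzS, pow_succ', ← div_div]
      exact hgB n

lemma exists_eq_one_add_X_pow_sub_one_mul {p : ℕ} (hp : p.Prime) (hp0 : (p : K) ≠ 0)
    (hp1 : ‖(p : K)‖ < 1) {m : ℕ} (hm : m ≠ 0) {ζ : K} (hζ : IsPrimitiveRoot ζ (p ^ m))
    (hs0 : 0 ≤ s) (hps : ‖(p : K)‖ ≤ s ^ p ^ m) (hf : ∀ n, ‖coeff n f‖ * s ^ n ≤ B)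
    (hvanish : ∀ ζ' : K, ζ' ^ p ^ m = 1 → HasSum (fun n => coeff n f * (ζ' - 1) ^ n) 0) :
    ∃ g, f = ((1 + X) ^ p ^ m - 1) * g ∧ ∀ n, ‖coeff n g‖ * s ^ n ≤ B / s ^ p ^ m := by
  classical
  have hN : 0 < p ^ m := pow_pos hp.pos m
  set S := (Polynomial.nthRootsFinset (p ^ m) (1 : K)).image (· - 1)
  have hS : ∀ z ∈ S, ∃ ζ' : K, ζ' ^ p ^ m = 1 ∧ ζ' - 1 = z := by
    simp [S, Polynomial.mem_nthRootsFinset hN]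
  have hSs : ∀ z ∈ S, ‖z‖ < s := by
    intro z hz
    obtain ⟨ζ', hζ', rfl⟩ := hS z hz
    exact lt_of_pow_lt_pow_left₀ _ hs0 ((norm_sub_one_pow_lt hp hp0 hp1 hm hζ').trans_le hps)
  obtain ⟨g, hfg, hg⟩ := exists_eq_prod_X_sub_C_mul S hSs hf fun z hz => by
    obtain ⟨ζ', hζ', rfl⟩ := hS z hz
    exact hvanish ζ' hζ'
  rw [card_image_of_injective _ sub_left_injective, hζ.card_nthRootsFinset] at hg
  exact ⟨g, hfg.trans (by rw [prod_X_sub_C_image_sub_one hN hζ]), hg⟩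

lemma norm_coeff_order_mul_pow_le_of_vanishing {p : ℕ} (hp : p.Prime)
    (hpnorm : ‖(p : K)‖ = (p : ℝ)⁻¹) {F : K⟦X⟧} (hF : F ≠ 0) {C : ℝ}
    (hC : ∀ n, ‖coeff n F‖ ≤ C * √((n : ℝ) + 1)) {m : ℕ} (hm : m ≠ 0) {ζ : K}
    (hζ : IsPrimitiveRoot ζ (p ^ m))
    (hvanish : ∀ ζ' : K, ζ' ^ p ^ m = 1 → HasSum (fun n => coeff n F * (ζ' - 1) ^ n) 0)
    (hs0 : 0 < s) (hs1 : s ≤ 1) (hsN : s ^ p ^ m = (p : ℝ)⁻¹) :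
    ‖coeff F.order.toNat F‖ * s ^ F.order.toNat ≤ (p ^ m : ℝ)⁻¹ * (C * √(2 * p ^ m) * p) := by
  have hp1 : (1 : ℝ) < p := by exact_mod_cast hp.one_lt
  have hC0 : 0 ≤ C := by simpa using (norm_nonneg _).trans (hC 0)
  have hFs : ∀ n, ‖coeff n F‖ * s ^ n ≤ C * √(2 * (p ^ m : ℕ)) := fun n =>
    calc ‖coeff n F‖ * s ^ n ≤ C * (√((n : ℝ) + 1) * s ^ n) := by
          rw [← mul_assoc]; gcongr; exact hC n
      _ ≤ C * √(2 * (p ^ m : ℕ)) := by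
          gcongr
          refine sqrt_succ_mul_pow_le hs0.le hs1 (hsN.trans_le ?_) n
          rw [inv_le_comm₀ (by positivity) (by norm_num)]
          norm_num
          exact_mod_cast hp.two_le
  obtain ⟨G, hFG, hG⟩ := exists_eq_one_add_X_pow_sub_one_mul hp
    (by rw [← norm_ne_zero_iff, hpnorm]; positivity)
    (by rw [hpnorm]; exact inv_lt_one_of_one_lt₀ hp1) hm hζ hs0.le (hpnorm.trans hsN.symm).le hFs
    hvanish
  have hNnorm : ‖((p ^ m : ℕ) : K)‖ = (p ^ m : ℝ)⁻¹ := by simp [hpnorm]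
  have hNK : ((p ^ m : ℕ) : K) ≠ 0 := by rw [← norm_ne_zero_iff, hNnorm]; positivity
  have h := norm_coeff_order_mul_pow_le hNK hFG hF hs0.le hs1 hG
  rw [hNnorm, hsN, div_inv_eq_mul] at h
  exact_mod_cast h

lemma sq_norm_coeff_order_mul_le {p : ℕ} (hp : p.Prime) (hpnorm : ‖(p : K)‖ = (p : ℝ)⁻¹)
    {F : K⟦X⟧} (hF : F ≠ 0) {C : ℝ} (hC : ∀ n, ‖coeff n F‖ ≤ C * √((n : ℝ) + 1))
    {m : ℕ} (hm : m ≠ 0) {ζ : K} (hζ : IsPrimitiveRoot ζ (p ^ m))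
    (hvanish : ∀ ζ' : K, ζ' ^ p ^ m = 1 → HasSum (fun n => coeff n F * (ζ' - 1) ^ n) 0) :
    ‖coeff F.order.toNat F‖ ^ 2 * p ^ m ≤ 2 * (C * p ^ (F.order.toNat + 1)) ^ 2 := by
  set d := F.order.toNat
  have hp1 : (1 : ℝ) < p := by exact_mod_cast hp.one_lt
  have hN : (p ^ m : ℕ) ≠ 0 := (pow_pos hp.pos m).ne'
  set s : ℝ := (p : ℝ)⁻¹ ^ ((p ^ m : ℕ) : ℝ)⁻¹
  have hsN : s ^ p ^ m = (p : ℝ)⁻¹ := Real.rpow_inv_natCast_pow (by positivity) hN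
  have hs0 : 0 < s := Real.rpow_pos_of_pos (by positivity) _
  have hs1 : s < 1 := Real.rpow_lt_one (by positivity) (inv_lt_one_of_one_lt₀ hp1) (by positivity)
  have hsp : 1 ≤ s * p := by
    have hps : (p : ℝ)⁻¹ ≤ s := hsN ▸ pow_le_of_le_one hs0.le hs1.le hN
    simpa [inv_mul_cancel₀ (by positivity : (p : ℝ) ≠ 0)] using
      mul_le_mul_of_nonneg_right hps (by positivity : (0 : ℝ) ≤ p)
  have h := norm_coeff_order_mul_pow_le_of_vanishing hp hpnorm hF hC hm hζ hvanish hs0 hs1.le hsN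
  have hbound : ‖coeff d F‖ ≤ √(2 * p ^ m) / p ^ m * (C * p ^ (d + 1)) :=
    calc ‖coeff d F‖ ≤ ‖coeff d F‖ * (s * p) ^ d :=
          le_mul_of_one_le_right (norm_nonneg _) (one_le_pow₀ hsp)
      _ = ‖coeff d F‖ * s ^ d * p ^ d := by ring
      _ ≤ (p ^ m : ℝ)⁻¹ * (C * √(2 * p ^ m) * p) * p ^ d := by gcongr
      _ = √(2 * p ^ m) / p ^ m * (C * p ^ (d + 1)) := by field_simp; ring
  calc ‖coeff d F‖ ^ 2 * p ^ m ≤ (√(2 * p ^ m) / p ^ m * (C * p ^ (d + 1))) ^ 2 * p ^ m := by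
        gcongr
    _ = 2 * (C * p ^ (d + 1)) ^ 2 := by
      rw [mul_pow, div_pow, Real.sq_sqrt (by positivity)]
      field_simp

end NormedField

/-- Let `f = ∑ aₙ Xⁿ` be a power series over a complete ultrametric
extension `K` of `ℚ_p` (containing all `p`-power roots of unity) of growth
`O(log^{1/2})`, expressed by the standard coefficient criterion `‖aₙ‖ = O((n+1)^{1/2})`.
If `f(ζ - 1) = 0` for every `p`-power root of unity `ζ`, then `f = 0`. -/
theorem vanishing_at_cyclotomic_points (p : ℕ) (hp : p.Prime)
    (K : Type*) [NormedField K] [IsUltrametricDist K] [CompleteSpace K]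
    (hpnorm : ‖(p : K)‖ = (p : ℝ)⁻¹)
    (hroots : ∀ m : ℕ, ∃ ζ : K, IsPrimitiveRoot ζ (p ^ m))
    (a : ℕ → K)
    (hgrowth : ∃ C : ℝ, ∀ n : ℕ, ‖a n‖ ≤ C * ((n : ℝ) + 1) ^ ((1 : ℝ) / 2))
    (hvanish : ∀ m : ℕ, ∀ ζ : K, ζ ^ (p ^ m) = 1 →
      HasSum (fun n => a n * (ζ - 1) ^ n) 0) :
    ∀ n : ℕ, a n = 0 := by
  obtain ⟨C, hC⟩ := hgrowth
  set F := PowerSeries.mk a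
  suffices hF : F = 0 by intro n; simpa [F] using congrArg (coeff n) hF
  by_contra hF
  set x := ‖coeff F.order.toNat F‖
  have hx : 0 < x := norm_pos_iff.mpr (coeff_order hF)
  have hp1 : (1 : ℝ) < p := by exact_mod_cast hp.one_lt
  obtain ⟨m, hm⟩ := pow_unbounded_of_one_lt (2 * (C * p ^ (F.order.toNat + 1)) ^ 2 / x ^ 2) hp1
  rw [div_lt_iff₀ (by positivity)] at hm
  obtain ⟨ζ, hζ⟩ := hroots (m + 1)
  have key : x ^ 2 * p ^ (m + 1) ≤ 2 * (C * p ^ (F.order.toNat + 1)) ^ 2 :=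
    sq_norm_coeff_order_mul_le hp hpnorm hF
    (fun n => by simpa [F, Real.sqrt_eq_rpow] using hC n) (m.succ_ne_zero) hζ
    fun ζ' hζ' => by simpa [F] using hvanish (m + 1) ζ' hζ'
  have hmono : (p : ℝ) ^ m * x ^ 2 ≤ p ^ (m + 1) * x ^ 2 := by gcongr; exacts [hp1.le, m.le_succ]
  linarith
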